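/- In Wegner's category Mon (objects: injective bounded operators f: X' → X between Banach spaces; morphisms: commuting squares (α', α) up to the homotopy relation where (α', α) = 0 iff there exists a bounded operator h: X → Y' with g∘h = α), every morphism has a cokernel: the cokernel of (α', α): f → g is the object ι: g[Y'] + α[X] → Y, where g[Y'] + α[X] carries the norm ‖z‖ = inf{‖y'‖_{Y'} + ‖x‖_X : z = g(y') + α(x)}, together with the morphism (g, id_Y). -/

import Mathlib

noncomputable section

variable {Y' X Y : Type}
  [NormedAddCommGroup Y'] [NormedSpace ℝ Y'] [CompleteSpace Y']
  [NormedAddCommGroup X] [NormedSpace ℝ X] [CompleteSpace X]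
  [NormedAddCommGroup Y] [NormedSpace ℝ Y] [CompleteSpace Y]

/-- The operator `(y', x) ↦ g y' + u x` on `Y' ×₁ X` (product with the sum norm). -/
def coprodL1 (g : Y' →L[ℝ] Y) (u : X →L[ℝ] Y) : WithLp 1 (Y' × X) →L[ℝ] Y :=
  (g.coprod u).comp (WithLp.prodContinuousLinearEquiv 1 ℝ Y' X).toContinuousLinearMap

/-- Its kernel. -/
def cokKer (g : Y' →L[ℝ] Y) (u : X →L[ℝ] Y) : Submodule ℝ (WithLp 1 (Y' × X)) :=
  LinearMap.ker (coprodL1 g u).toLinearMap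

instance cokKerClosed (g : Y' →L[ℝ] Y) (u : X →L[ℝ] Y) :
    IsClosed ((cokKer g u : Set (WithLp 1 (Y' × X)))) :=
  ContinuousLinearMap.isClosed_ker (coprodL1 g u)

/-- The Banach space `g[Y'] + u[X]` with the norm
`‖z‖ = inf { ‖y'‖ + ‖x‖ : z = g y' + u x }`, realized as the quotient of `Y' ×₁ X` by the kernel
of `(y', x) ↦ g y' + u x`. -/
abbrev SumSp (g : Y' →L[ℝ] Y) (u : X →L[ℝ] Y) : Type :=
  WithLp 1 (Y' × X) ⧸ cokKer g u

/-- The canonical quotient map onto `SumSp g u`. -/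
def sumMk (g : Y' →L[ℝ] Y) (u : X →L[ℝ] Y) : WithLp 1 (Y' × X) →L[ℝ] SumSp g u :=
  LinearMap.mkContinuous (cokKer g u).mkQ 1
    (fun w => by rw [one_mul]; exact Submodule.Quotient.norm_mk_le _ w)

/-- The induced injective operator `SumSp g u → Y`, i.e. the inclusion of `g[Y'] + u[X]`
(with the infimum norm) into `Y`. -/
def sumIncl (g : Y' →L[ℝ] Y) (u : X →L[ℝ] Y) : SumSp g u →L[ℝ] Y :=
  LinearMap.mkContinuous ((cokKer g u).liftQ (coprodL1 g u).toLinearMap le_rfl)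
    ‖coprodL1 g u‖
    (fun q => by
      obtain ⟨w, rfl⟩ := Submodule.Quotient.mk_surjective _ q
      change ‖(coprodL1 g u).toLinearMap w‖ ≤ ‖coprodL1 g u‖ * ‖Submodule.Quotient.mk (p := cokKer g u) w‖
      refine le_of_forall_pos_le_add fun ε hε => ?_
      set f := coprodL1 g u with hf
      have hd : (0:ℝ) < ε / (‖f‖ + 1) := by positivity
      obtain ⟨m, hm, hlt⟩ :=
        Submodule.Quotient.norm_mk_lt (Submodule.Quotient.mk (p := cokKer g u) w) hd
      have hmem : m - w ∈ cokKer g u := (Submodule.Quotient.eq _).1 hm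
      have h0 : f m - f w = 0 := by
        have h0' : f (m - w) = 0 := hmem
        rw [map_sub] at h0'; exact h0'
      have hfw : f w = f m := (sub_eq_zero.1 h0).symm
      calc ‖f.toLinearMap w‖ = ‖f m‖ := by
            show ‖f w‖ = ‖f m‖
            rw [hfw]
        _ ≤ ‖f‖ * ‖m‖ := f.le_opNorm m
        _ ≤ ‖f‖ * (‖Submodule.Quotient.mk (p := cokKer g u) w‖ + ε / (‖f‖ + 1)) :=
            mul_le_mul_of_nonneg_left (le_of_lt hlt) (norm_nonneg _)
        _ ≤ ‖f‖ * ‖Submodule.Quotient.mk (p := cokKer g u) w‖ + ε := by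
            rw [mul_add]
            refine add_le_add le_rfl ?_
            have h1 : ‖f‖ ≤ ‖f‖ + 1 := by linarith
            calc ‖f‖ * (ε / (‖f‖ + 1)) ≤ (‖f‖ + 1) * (ε / (‖f‖ + 1)) :=
                  mul_le_mul_of_nonneg_right h1 (by positivity)
              _ = ε := by field_simp)

/-- The canonical map `Y' → SumSp g u`, `y' ↦ class of (y', 0)`. -/
def sumInl (g : Y' →L[ℝ] Y) (u : X →L[ℝ] Y) : Y' →L[ℝ] SumSp g u :=
  (sumMk g u).comp
    ((WithLp.prodContinuousLinearEquiv 1 ℝ Y' X).symm.toContinuousLinearMap.comp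
      (ContinuousLinearMap.inl ℝ Y' X))


/-! `SumSp g u` is the quotient of `Y' ×₁ X` by the kernel of `(y', x) ↦ g y' + u x`, so its
quotient norm is the infimum norm and the induced map to `Y` is injective with range
`g[Y'] + u[X]`. Because objects of `Mon` are injective operators, an `h` with `k ∘ h = σ` for a
commuting square `(σ', σ)` into `k` automatically satisfies `h ∘ ι = σ'`; this yields both the
null-homotopy `x ↦ [(0, x)]` of `(sumInl, id) ∘ (α', α)` and the uniqueness of the factorisation.
For existence, a null-homotopy `h₀` of `(β', β) ∘ (α', α)` makes `(y', x) ↦ β' y' + h₀ x` vanish on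
the kernel, so it descends to `μ' : SumSp g α → Z'`, and `(μ', β)` factors `(β', β)` on the nose. -/

section

variable {W Y' X Y Z' Z : Type} [NormedAddCommGroup W] [NormedSpace ℝ W]
  [NormedAddCommGroup Y'] [NormedSpace ℝ Y'] [NormedAddCommGroup X] [NormedSpace ℝ X]
  [NormedAddCommGroup Y] [NormedSpace ℝ Y] [NormedAddCommGroup Z'] [NormedSpace ℝ Z']
  [NormedAddCommGroup Z] [NormedSpace ℝ Z]

@[simp]
lemma coprodL1_apply (g : Y' →L[ℝ] Y) (u : X →L[ℝ] Y) (w : WithLp 1 (Y' × X)) :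
    coprodL1 g u w = g w.fst + u w.snd := rfl

lemma comp_coprodL1 (k : Y →L[ℝ] Z) (g : Y' →L[ℝ] Y) (u : X →L[ℝ] Y) :
    k.comp (coprodL1 g u) = coprodL1 (k.comp g) (k.comp u) := by
  ext w
  simp

lemma sumMk_surjective (g : Y' →L[ℝ] Y) (u : X →L[ℝ] Y) : Function.Surjective (sumMk g u) :=
  Submodule.mkQ_surjective _

@[simp]
lemma sumIncl_sumMk (g : Y' →L[ℝ] Y) (u : X →L[ℝ] Y) (w : WithLp 1 (Y' × X)) :
    sumIncl g u (sumMk g u w) = g w.fst + u w.snd := rfl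

lemma sumIncl_injective (g : Y' →L[ℝ] Y) (u : X →L[ℝ] Y) : Function.Injective (sumIncl g u) :=
  LinearMap.ker_eq_bot.1 (Submodule.ker_liftQ_eq_bot _ _ _ le_rfl)

lemma range_sumIncl (g : Y' →L[ℝ] Y) (u : X →L[ℝ] Y) :
    Set.range (sumIncl g u) = {z : Y | ∃ y' x, z = g y' + u x} := by
  ext z
  constructor
  · rintro ⟨q, rfl⟩
    obtain ⟨w, rfl⟩ := sumMk_surjective g u q
    exact ⟨w.fst, w.snd, sumIncl_sumMk g u w⟩
  · rintro ⟨y', x, rfl⟩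
    exact ⟨sumMk g u (WithLp.toLp 1 (y', x)), rfl⟩

lemma sumMk_eq_iff (g : Y' →L[ℝ] Y) (u : X →L[ℝ] Y) (w : WithLp 1 (Y' × X)) (q : SumSp g u) :
    sumMk g u w = q ↔ sumIncl g u q = g w.fst + u w.snd := by
  rw [← (sumIncl_injective g u).eq_iff, sumIncl_sumMk, eq_comm]

lemma norm_sumSp_eq_sInf (g : Y' →L[ℝ] Y) (u : X →L[ℝ] Y) (q : SumSp g u) :
    ‖q‖ = sInf {r : ℝ | ∃ y' x, sumIncl g u q = g y' + u x ∧ r = ‖y'‖ + ‖x‖} := by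
  symm
  apply csInf_eq_of_forall_ge_of_forall_gt_exists_lt
  · obtain ⟨w, rfl⟩ := sumMk_surjective g u q
    exact ⟨_, w.fst, w.snd, sumIncl_sumMk g u w, rfl⟩
  · rintro _ ⟨y', x, hq, rfl⟩
    have hw : sumMk g u (WithLp.toLp 1 (y', x)) = q := (sumMk_eq_iff g u _ q).2 hq
    calc ‖q‖ ≤ ‖WithLp.toLp 1 (y', x)‖ := hw ▸ Submodule.Quotient.norm_mk_le _ _
      _ = ‖y'‖ + ‖x‖ := WithLp.prod_norm_eq_of_L1 _
  · intro r hr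
    obtain ⟨w, hw, hlt⟩ := Submodule.Quotient.norm_mk_lt q (sub_pos.2 hr)
    refine ⟨‖w‖, ⟨w.fst, w.snd, (sumMk_eq_iff g u w q).1 hw, WithLp.prod_norm_eq_of_L1 w⟩, ?_⟩
    linarith

lemma sumIncl_comp_sumInl (g : Y' →L[ℝ] Y) (u : X →L[ℝ] Y) :
    (sumIncl g u).comp (sumInl g u) = g := by
  ext y'
  simp [sumInl]

def sumInr (g : Y' →L[ℝ] Y) (u : X →L[ℝ] Y) : X →L[ℝ] SumSp g u :=
  (sumMk g u).comp
    ((WithLp.prodContinuousLinearEquiv 1 ℝ Y' X).symm.toContinuousLinearMap.comp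
      (ContinuousLinearMap.inr ℝ Y' X))

lemma sumIncl_comp_sumInr (g : Y' →L[ℝ] Y) (u : X →L[ℝ] Y) :
    (sumIncl g u).comp (sumInr g u) = u := by
  ext x
  simp [sumInr]

lemma ContinuousLinearMap.comp_eq_of_injective_of_comp_eq {k : Z' →L[ℝ] Z}
    (hk : Function.Injective k) {σ' : W →L[ℝ] Z'} {σ : Y →L[ℝ] Z} {ι : W →L[ℝ] Y} {h : Y →L[ℝ] Z'}
    (hsq : k.comp σ' = σ.comp ι) (hh : k.comp h = σ) : h.comp ι = σ' :=
  ContinuousLinearMap.cancel_left hk (by rw [← ContinuousLinearMap.comp_assoc, hh, hsq])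

def sumDesc (g : Y' →L[ℝ] Y) (u : X →L[ℝ] Y) (β' : Y' →L[ℝ] Z') (γ : X →L[ℝ] Z')
    (h : cokKer g u ≤ (coprodL1 β' γ).ker) : SumSp g u →L[ℝ] Z' :=
  (cokKer g u).liftQL (coprodL1 β' γ) h

@[simp]
lemma sumDesc_sumMk (g : Y' →L[ℝ] Y) (u : X →L[ℝ] Y) (β' : Y' →L[ℝ] Z') (γ : X →L[ℝ] Z')
    (h : cokKer g u ≤ (coprodL1 β' γ).ker) (w : WithLp 1 (Y' × X)) :
    sumDesc g u β' γ h (sumMk g u w) = β' w.fst + γ w.snd := rfl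

lemma comp_coprodL1_eq_comp_coprodL1 {g : Y' →L[ℝ] Y} {u : X →L[ℝ] Y} {k : Z' →L[ℝ] Z}
    {β' : Y' →L[ℝ] Z'} {γ : X →L[ℝ] Z'} {β : Y →L[ℝ] Z}
    (hβ' : k.comp β' = β.comp g) (hγ : k.comp γ = β.comp u) :
    k.comp (coprodL1 β' γ) = β.comp (coprodL1 g u) := by
  rw [comp_coprodL1, comp_coprodL1, hβ', hγ]

lemma cokKer_le_ker_coprodL1 {g : Y' →L[ℝ] Y} {u : X →L[ℝ] Y} {k : Z' →L[ℝ] Z}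
    (hk : Function.Injective k) {β' : Y' →L[ℝ] Z'} {γ : X →L[ℝ] Z'} {β : Y →L[ℝ] Z}
    (hβ' : k.comp β' = β.comp g) (hγ : k.comp γ = β.comp u) :
    cokKer g u ≤ (coprodL1 β' γ).ker := by
  intro w hw
  rw [LinearMap.mem_ker]
  apply hk
  calc k (coprodL1 β' γ w) = β (coprodL1 g u w) := congr($(comp_coprodL1_eq_comp_coprodL1 hβ' hγ) w)
    _ = k 0 := by rw [show coprodL1 g u w = 0 from hw, map_zero, map_zero]

lemma comp_sumDesc {g : Y' →L[ℝ] Y} {u : X →L[ℝ] Y} {k : Z' →L[ℝ] Z}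
    {β' : Y' →L[ℝ] Z'} {γ : X →L[ℝ] Z'} {β : Y →L[ℝ] Z}
    (hβ' : k.comp β' = β.comp g) (hγ : k.comp γ = β.comp u)
    (h : cokKer g u ≤ (coprodL1 β' γ).ker) :
    k.comp (sumDesc g u β' γ h) = β.comp (sumIncl g u) := by
  ext q
  obtain ⟨w, rfl⟩ := sumMk_surjective g u q
  exact congr($(comp_coprodL1_eq_comp_coprodL1 hβ' hγ) w)

lemma sumDesc_comp_sumInl (g : Y' →L[ℝ] Y) (u : X →L[ℝ] Y) (β' : Y' →L[ℝ] Z') (γ : X →L[ℝ] Z')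
    (h : cokKer g u ≤ (coprodL1 β' γ).ker) :
    (sumDesc g u β' γ h).comp (sumInl g u) = β' := by
  ext y'
  simp [sumInl]

end

open ContinuousLinearMap in
theorem stmt18_general {X' : Type} [NormedAddCommGroup X'] [NormedSpace ℝ X']
    (f : X' →L[ℝ] X)
    (g : Y' →L[ℝ] Y)
    (α' : X' →L[ℝ] Y') (α : X →L[ℝ] Y) (hsq : g.comp α' = α.comp f) :
    -- `ι = sumIncl g α` is an injective operator with range `g[Y'] + α[X]`, and the norm on its
    -- domain is `‖z‖ = inf {‖y'‖ + ‖x‖ : z = g y' + α x}`: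
    Function.Injective (sumIncl g α) ∧
    Set.range (sumIncl g α) = {z : Y | ∃ y' x, z = g y' + α x} ∧
    (∀ q : SumSp g α,
      ‖q‖ = sInf {r : ℝ | ∃ y' x, sumIncl g α q = g y' + α x ∧ r = ‖y'‖ + ‖x‖}) ∧
    -- `(sumInl g α, id_Y)` is a morphism `g ⟶ ι`:
    (sumIncl g α).comp (sumInl g α) = g ∧
    -- composing it with `(α', α)` gives zero in `Mon` (the composite is homotopic to `0`):
    (∃ h : X →L[ℝ] SumSp g α, (sumIncl g α).comp h = α ∧ h.comp f = (sumInl g α).comp α') ∧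
    -- universal property: any morphism `(β', β) : g ⟶ k` with `(β', β)∘(α', α) = 0` in `Mon`
    -- factors through `(sumInl g α, id_Y)`, uniquely up to the homotopy relation:
    ∀ (Z' Z : Type) (_ : NormedAddCommGroup Z') (_ : NormedSpace ℝ Z') (_ : CompleteSpace Z')
      (_ : NormedAddCommGroup Z) (_ : NormedSpace ℝ Z) (_ : CompleteSpace Z)
      (k : Z' →L[ℝ] Z), Function.Injective k →
      ∀ (β' : Y' →L[ℝ] Z') (β : Y →L[ℝ] Z), k.comp β' = β.comp g →
        (∃ h₀ : X →L[ℝ] Z', k.comp h₀ = β.comp α ∧ h₀.comp f = β'.comp α') →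
        (∃ (μ' : SumSp g α →L[ℝ] Z') (μ : Y →L[ℝ] Z),
            k.comp μ' = μ.comp (sumIncl g α) ∧
            (∃ h : Y →L[ℝ] Z', k.comp h = μ - β ∧ h.comp g = μ'.comp (sumInl g α) - β')) ∧
        ∀ (μ'₁ : SumSp g α →L[ℝ] Z') (μ₁ : Y →L[ℝ] Z)
          (μ'₂ : SumSp g α →L[ℝ] Z') (μ₂ : Y →L[ℝ] Z),
          k.comp μ'₁ = μ₁.comp (sumIncl g α) → k.comp μ'₂ = μ₂.comp (sumIncl g α) →
          (∃ h : Y →L[ℝ] Z', k.comp h = μ₁ - β ∧ h.comp g = μ'₁.comp (sumInl g α) - β') →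
          (∃ h : Y →L[ℝ] Z', k.comp h = μ₂ - β ∧ h.comp g = μ'₂.comp (sumInl g α) - β') →
          ∃ h : Y →L[ℝ] Z', k.comp h = μ₁ - μ₂ ∧ h.comp (sumIncl g α) = μ'₁ - μ'₂ := by
  refine ⟨sumIncl_injective g α, range_sumIncl g α, norm_sumSp_eq_sInf g α, sumIncl_comp_sumInl g α,
    ⟨sumInr g α, sumIncl_comp_sumInr g α, ?_⟩, ?_⟩
  · refine comp_eq_of_injective_of_comp_eq (sumIncl_injective g α) ?_ (sumIncl_comp_sumInr g α)
    rw [← comp_assoc, sumIncl_comp_sumInl, hsq]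
  rintro Z' Z _ _ _ _ _ _ k hk β' β hβ' ⟨h₀, hkh₀, -⟩
  have hker := cokKer_le_ker_coprodL1 hk hβ' hkh₀
  refine ⟨⟨sumDesc g α β' h₀ hker, β, comp_sumDesc hβ' hkh₀ hker, 0, by simp, ?_⟩, ?_⟩
  · rw [sumDesc_comp_sumInl, sub_self, zero_comp]
  rintro μ'₁ μ₁ μ'₂ μ₂ hc₁ hc₂ ⟨h₁, hh₁, -⟩ ⟨h₂, hh₂, -⟩
  have hh : k.comp (h₁ - h₂) = μ₁ - μ₂ := by
    rw [comp_sub, hh₁, hh₂, sub_sub_sub_cancel_right]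
  exact ⟨h₁ - h₂, hh, comp_eq_of_injective_of_comp_eq hk (by rw [comp_sub, hc₁, hc₂, sub_comp]) hh⟩

/-- Wegner's category `Mon` has cokernels: given objects `f : X' ↪ X`, `g : Y' ↪ Y` (injective
bounded operators between Banach spaces) and a morphism `(α', α) : f ⟶ g`, its cokernel is the
object `ι : g[Y'] + α[X] ↪ Y`, where `g[Y'] + α[X]` carries the norm
`‖z‖ = inf {‖y'‖ + ‖x‖ : z = g y' + α x}` (realized as `SumSp g α` with inclusion `sumIncl g α`),
together with the morphism `(sumInl g α, id_Y) : g ⟶ ι`; morphisms of `Mon` are commuting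
squares up to the homotopy relation `(σ', σ) = 0 ↔ ∃ h, (target inclusion) ∘ h = σ`. -/
theorem stmt18 {X' : Type} [NormedAddCommGroup X'] [NormedSpace ℝ X'] [CompleteSpace X']
    (f : X' →L[ℝ] X) (hf : Function.Injective f)
    (g : Y' →L[ℝ] Y) (hg : Function.Injective g)
    (α' : X' →L[ℝ] Y') (α : X →L[ℝ] Y) (hsq : g.comp α' = α.comp f) :
    -- `ι = sumIncl g α` is an injective operator with range `g[Y'] + α[X]`, and the norm on its
    -- domain is `‖z‖ = inf {‖y'‖ + ‖x‖ : z = g y' + α x}`: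
    Function.Injective (sumIncl g α) ∧
    Set.range (sumIncl g α) = {z : Y | ∃ y' x, z = g y' + α x} ∧
    (∀ q : SumSp g α,
      ‖q‖ = sInf {r : ℝ | ∃ y' x, sumIncl g α q = g y' + α x ∧ r = ‖y'‖ + ‖x‖}) ∧
    -- `(sumInl g α, id_Y)` is a morphism `g ⟶ ι`:
    (sumIncl g α).comp (sumInl g α) = g ∧
    -- composing it with `(α', α)` gives zero in `Mon` (the composite is homotopic to `0`):
    (∃ h : X →L[ℝ] SumSp g α, (sumIncl g α).comp h = α ∧ h.comp f = (sumInl g α).comp α') ∧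
    -- universal property: any morphism `(β', β) : g ⟶ k` with `(β', β)∘(α', α) = 0` in `Mon`
    -- factors through `(sumInl g α, id_Y)`, uniquely up to the homotopy relation:
    ∀ (Z' Z : Type) (_ : NormedAddCommGroup Z') (_ : NormedSpace ℝ Z') (_ : CompleteSpace Z')
      (_ : NormedAddCommGroup Z) (_ : NormedSpace ℝ Z) (_ : CompleteSpace Z)
      (k : Z' →L[ℝ] Z), Function.Injective k →
      ∀ (β' : Y' →L[ℝ] Z') (β : Y →L[ℝ] Z), k.comp β' = β.comp g →
        (∃ h₀ : X →L[ℝ] Z', k.comp h₀ = β.comp α ∧ h₀.comp f = β'.comp α') →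
        (∃ (μ' : SumSp g α →L[ℝ] Z') (μ : Y →L[ℝ] Z),
            k.comp μ' = μ.comp (sumIncl g α) ∧
            (∃ h : Y →L[ℝ] Z', k.comp h = μ - β ∧ h.comp g = μ'.comp (sumInl g α) - β')) ∧
        ∀ (μ'₁ : SumSp g α →L[ℝ] Z') (μ₁ : Y →L[ℝ] Z)
          (μ'₂ : SumSp g α →L[ℝ] Z') (μ₂ : Y →L[ℝ] Z),
          k.comp μ'₁ = μ₁.comp (sumIncl g α) → k.comp μ'₂ = μ₂.comp (sumIncl g α) →
          (∃ h : Y →L[ℝ] Z', k.comp h = μ₁ - β ∧ h.comp g = μ'₁.comp (sumInl g α) - β') →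
          (∃ h : Y →L[ℝ] Z', k.comp h = μ₂ - β ∧ h.comp g = μ'₂.comp (sumInl g α) - β') →
          ∃ h : Y →L[ℝ] Z', k.comp h = μ₁ - μ₂ ∧ h.comp (sumIncl g α) = μ'₁ - μ'₂ :=
  stmt18_general f g α' α hsq

end
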